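/- arXiv:1804.06156 — 3 statements merged into one kernel-verified Lean document; each statement's English description precedes it below -/
import Mathlib

section
/- Let α ∈ R⁺ and let β ∈ Δ(α) be such that (α,β) < 0. Then for every β' ∈ N⁻(α,β) one has (α,β') = 0. -/
/- Setting: a reduced, irreducible, crystallographic, simply laced root system `roots`
in a real inner product space `V`, with a fixed base `base` of simple roots,
its Weyl group (generated by the reflections in the simple roots), the length
function, the (strong) Bruhat order, the weak left Bruhat order, the sets
`A_ℓ(v)`, `A(v)`, `D(w)`, `AD(v,w)`, and the partial order on roots induced
by the base. -/

open scoped InnerProductSpace Classical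

noncomputable section

variable {V : Type*} [NormedAddCommGroup V] [InnerProductSpace ℝ V]

/-- The underlying linear map of the reflection `s_α : x ↦ x - (2⟪x,α⟫/⟪α,α⟫) α`. -/
def reflMap (α : V) : V →ₗ[ℝ] V where
  toFun x := x - (2 * ⟪x, α⟫_ℝ / ⟪α, α⟫_ℝ) • α
  map_add' x y := by
    simp only [inner_add_left]
    rw [show 2 * (⟪x, α⟫_ℝ + ⟪y, α⟫_ℝ) / ⟪α, α⟫_ℝ
        = 2 * ⟪x, α⟫_ℝ / ⟪α, α⟫_ℝ + 2 * ⟪y, α⟫_ℝ / ⟪α, α⟫_ℝ by ring]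
    rw [add_smul]
    abel
  map_smul' c x := by
    simp only [real_inner_smul_left, RingHom.id_apply, smul_sub, smul_smul]
    rw [show 2 * (c * ⟪x, α⟫_ℝ) / ⟪α, α⟫_ℝ = c * (2 * ⟪x, α⟫_ℝ / ⟪α, α⟫_ℝ) by ring]

theorem reflMap_involutive (α : V) : Function.Involutive (reflMap α) := by
  intro x
  by_cases h : (⟪α, α⟫_ℝ) = (0 : ℝ)
  · have hα : α = 0 := inner_self_eq_zero.mp h
    simp [reflMap, hα]
  · show reflMap α (x - (2 * ⟪x, α⟫_ℝ / ⟪α, α⟫_ℝ) • α) = x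
    show (x - (2 * ⟪x, α⟫_ℝ / ⟪α, α⟫_ℝ) • α)
        - (2 * ⟪x - (2 * ⟪x, α⟫_ℝ / ⟪α, α⟫_ℝ) • α, α⟫_ℝ / ⟪α, α⟫_ℝ) • α = x
    have h1 : ⟪x - (2 * ⟪x, α⟫_ℝ / ⟪α, α⟫_ℝ) • α, α⟫_ℝ = -⟪x, α⟫_ℝ := by
      rw [inner_sub_left, real_inner_smul_left]
      field_simp
      ring
    rw [h1, show 2 * -⟪x, α⟫_ℝ / ⟪α, α⟫_ℝ = -(2 * ⟪x, α⟫_ℝ / ⟪α, α⟫_ℝ) by ring,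
      neg_smul, sub_neg_eq_add, sub_add_cancel]

/-- The reflection `s_α` in the hyperplane orthogonal to `α`,
as a linear automorphism of `V`. -/
def sRefl (α : V) : V ≃ₗ[ℝ] V := LinearEquiv.ofInvolutive (reflMap α) (reflMap_involutive α)

/-- A reduced, irreducible, crystallographic, simply laced root system in the real
inner product space `V`, together with a choice of base (system of simple roots)
and the corresponding coordinate function `coeff α β = n_β(α)`. -/
structure SimplyLacedRootSystem (V : Type*) [NormedAddCommGroup V]
    [InnerProductSpace ℝ V] : Type _ where
  /-- the set `R` of roots -/
  roots : Set V
  /-- the base `Δ` of simple roots -/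
  base : Finset V
  finite : roots.Finite
  nonzero : ∀ α ∈ roots, α ≠ 0
  span_eq_top : Submodule.span ℝ roots = ⊤
  /-- the root system is reduced -/
  reduced : ∀ α ∈ roots, ∀ t : ℝ, t • α ∈ roots → t = 1 ∨ t = -1
  /-- the root system is crystallographic: all `⟨γ,α⟩ = 2(γ,α)/(α,α)` are integers -/
  crystallographic : ∀ α ∈ roots, ∀ γ ∈ roots, ∃ n : ℤ, 2 * ⟪γ, α⟫_ℝ / ⟪α, α⟫_ℝ = (n : ℝ)
  reflect_mem : ∀ α ∈ roots, ∀ γ ∈ roots, sRefl α γ ∈ roots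
  /-- the root system is simply laced: all roots have the same length -/
  simplyLaced : ∀ α ∈ roots, ∀ γ ∈ roots, ⟪α, α⟫_ℝ = ⟪γ, γ⟫_ℝ
  /-- the root system is irreducible -/
  irreducible : ∀ R₁ R₂ : Set V, R₁ ∪ R₂ = roots →
    (∀ α ∈ R₁, ∀ γ ∈ R₂, ⟪α, γ⟫_ℝ = 0) → R₁ = ∅ ∨ R₂ = ∅
  base_subset : ↑base ⊆ roots
  base_indep : LinearIndependent ℝ (Subtype.val : {x : V // x ∈ base} → V)
  /-- `coeff α β` is the coefficient `n_β(α)` of the simple root `β` in `α` -/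
  coeff : V → V → ℝ
  coeff_spec : ∀ α ∈ roots, α = ∑ β ∈ base, coeff α β • β
  coeff_int : ∀ α ∈ roots, ∀ β ∈ base, ∃ n : ℤ, coeff α β = (n : ℝ)
  coeff_sign : ∀ α ∈ roots, (∀ β ∈ base, 0 ≤ coeff α β) ∨ (∀ β ∈ base, coeff α β ≤ 0)

namespace SimplyLacedRootSystem

variable (P : SimplyLacedRootSystem V)

/-- The set `R⁺` of positive roots. -/
def pos : Set V := {α ∈ P.roots | ∀ β ∈ P.base, 0 ≤ P.coeff α β}

/-- The support `Δ(α) = {β ∈ Δ : n_β(α) > 0}` of a (positive) root `α`. -/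
def support (α : V) : Finset V := P.base.filter (fun β => 0 < P.coeff α β)

/-- `N⁺(α,β) = {β' ∈ Δ(α) : (β,β') < 0 and (α,β') > 0}`. -/
def Nplus (α β : V) : Finset V :=
  (P.support α).filter (fun β' => ⟪β, β'⟫_ℝ < 0 ∧ 0 < ⟪α, β'⟫_ℝ)

/-- `N⁻(α,β) = {β' ∈ Δ(α) : (β,β') < 0 and (α,β') ≤ 0}`. -/
def Nminus (α β : V) : Finset V :=
  (P.support α).filter (fun β' => ⟪β, β'⟫_ℝ < 0 ∧ ⟪α, β'⟫_ℝ ≤ 0)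

/-- The partial order on `V` induced by the base: `x ≤ y` iff `y - x` is a
nonnegative linear combination of the simple roots. -/
def rle (x y : V) : Prop :=
  ∃ c : V → ℝ, (∀ β, 0 ≤ c β) ∧ y - x = ∑ β ∈ P.base, c β • β

/-- The strict version of the partial order `rle` on roots. -/
def rlt (x y : V) : Prop := P.rle x y ∧ x ≠ y

/-- `α` is a minimal element of the set `S` with respect to the partial order on roots. -/
def IsMinimalIn (α : V) (S : Set V) : Prop := α ∈ S ∧ ∀ γ ∈ S, ¬ P.rlt γ α

/-- The Weyl group `W`, i.e. the subgroup of `GL(V)` generated by the reflections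
in the simple roots (equivalently, by all the reflections `s_α`, `α ∈ R`). -/
def weyl : Subgroup (V ≃ₗ[ℝ] V) := Subgroup.closure (sRefl '' ↑P.base)

/-- The length function `ℓ` of `W` with respect to the simple reflections. -/
def len (w : V ≃ₗ[ℝ] V) : ℕ :=
  sInf {n | ∃ l : List V, l.length = n ∧ (∀ β ∈ l, β ∈ P.base) ∧ (l.map sRefl).prod = w}

/-- One step in the Bruhat order: multiplication by the reflection of a positive
root which increases the length. -/
def bStep (u w : V ≃ₗ[ℝ] V) : Prop :=
  ∃ α ∈ P.pos, w = sRefl α * u ∧ P.len u < P.len w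

/-- The (strong) Bruhat order `≤` on `W`. -/
def ble : (V ≃ₗ[ℝ] V) → (V ≃ₗ[ℝ] V) → Prop := Relation.ReflTransGen P.bStep

/-- The strict (strong) Bruhat order `<` on `W`. -/
def blt (u w : V ≃ₗ[ℝ] V) : Prop := P.ble u w ∧ u ≠ w

/-- The covering relation `⋖` of the Bruhat order. -/
def bcov (u w : V ≃ₗ[ℝ] V) : Prop := P.blt u w ∧ P.len w = P.len u + 1

/-- One step in the weak left Bruhat order. -/
def wlStep (u w : V ≃ₗ[ℝ] V) : Prop :=
  ∃ β ∈ P.base, w = sRefl β * u ∧ P.len u < P.len w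

/-- The weak left Bruhat order `≤_ℓ` on `W`. -/
def wle : (V ≃ₗ[ℝ] V) → (V ≃ₗ[ℝ] V) → Prop := Relation.ReflTransGen P.wlStep

/-- `A_ℓ(v) = {β ∈ Δ : v < s_β v}`. -/
def Al (v : V ≃ₗ[ℝ] V) : Set V := {β : V | β ∈ P.base ∧ P.blt v (sRefl β * v)}

/-- `A(v) = {α ∈ R⁺ : v⁻¹(α) > 0}`. -/
def A (v : V ≃ₗ[ℝ] V) : Set V := {α ∈ P.pos | v⁻¹ α ∈ P.pos}

/-- `D(w) = {α ∈ R⁺ : w⁻¹(α) < 0}`. -/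
def Dset (w : V ≃ₗ[ℝ] V) : Set V := {α ∈ P.pos | -(w⁻¹ α) ∈ P.pos}

/-- `AD(v,w) = A(v) ∩ D(w)`. -/
def ADset (v w : V ≃ₗ[ℝ] V) : Set V := P.A v ∩ P.Dset w

end SimplyLacedRootSystem

/-- Let α ∈ R⁺ and let β ∈ Δ(α) be such that (α,β) < 0. Then for every
β' ∈ N⁻(α,β) one has (α,β') = 0. -/
theorem stmt8 (P : SimplyLacedRootSystem V) (α : V) (hα : α ∈ P.pos)
    (β : V) (hβ : β ∈ P.support α) (hneg : ⟪α, β⟫_ℝ < 0) :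
    ∀ β' ∈ P.Nminus α β, ⟪α, β'⟫_ℝ = 0 := by
  intro β' hβ'
  -- unpack memberships
  rw [SimplyLacedRootSystem.Nminus, Finset.mem_filter] at hβ'
  obtain ⟨hβ'supp, hββ', hαβ'⟩ := hβ'
  rw [SimplyLacedRootSystem.support, Finset.mem_filter] at hβ hβ'supp
  obtain ⟨hβbase, hβcoef⟩ := hβ
  obtain ⟨hβ'base, hβ'coef⟩ := hβ'supp
  have hαroots : α ∈ P.roots := hα.1
  have hβroots : β ∈ P.roots := P.base_subset hβbase
  have hβ'roots : β' ∈ P.roots := P.base_subset hβ'base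
  by_contra hne
  have hαβ'lt : ⟪α, β'⟫_ℝ < 0 := lt_of_le_of_ne hαβ' hne
  set c : ℝ := ⟪α, α⟫_ℝ with hc
  have hcpos : 0 < c :=
    lt_of_le_of_ne real_inner_self_nonneg
      (Ne.symm (inner_self_ne_zero.mpr (P.nonzero α hαroots)))
  have hββ : ⟪β, β⟫_ℝ = c := (P.simplyLaced β hβroots α hαroots).symm ▸ rfl
  have hβ'β' : ⟪β', β'⟫_ℝ = c := (P.simplyLaced β' hβ'roots α hαroots).symm ▸ rfl
  -- the half-norm bound from crystallographic condition
  have key : ∀ γ ∈ P.roots, ∀ δ ∈ P.roots, ⟪δ, δ⟫_ℝ = c → ⟪γ, δ⟫_ℝ < 0 →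
      ⟪γ, δ⟫_ℝ ≤ -c / 2 := by
    intro γ hγ δ hδ hδc hlt
    obtain ⟨n, hn⟩ := P.crystallographic δ hδ γ hγ
    rw [hδc] at hn
    have h2 : 2 * ⟪γ, δ⟫_ℝ = n * c := by
      field_simp at hn; linarith
    have hn1 : (n : ℝ) ≤ -1 := by
      have hr : (n : ℝ) < 0 := by
        by_contra h
        push_neg at h
        nlinarith
      have hz : n < 0 := by exact_mod_cast hr
      have : n ≤ -1 := by omega
      exact_mod_cast this
    nlinarith
  have h1 : ⟪α, β⟫_ℝ ≤ -c / 2 := key α hαroots β hβroots hββ hneg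
  have h2 : ⟪α, β'⟫_ℝ ≤ -c / 2 := key α hαroots β' hβ'roots hβ'β' hαβ'lt
  have h3 : ⟪β, β'⟫_ℝ ≤ -c / 2 := key β hβroots β' hβ'roots hβ'β' hββ'
  -- the squared norm of α + β + β'
  have hexp : ⟪α + β + β', α + β + β'⟫_ℝ
      = c + c + c + 2 * ⟪α, β⟫_ℝ + 2 * ⟪α, β'⟫_ℝ + 2 * ⟪β, β'⟫_ℝ := by
    simp only [inner_add_left, inner_add_right]
    rw [real_inner_comm β α, real_inner_comm β' α, real_inner_comm β' β, hββ, hβ'β']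
    ring
  have hnn : (0:ℝ) ≤ ⟪α + β + β', α + β + β'⟫_ℝ := real_inner_self_nonneg
  have hzero : α + β + β' = 0 := by
    rw [← inner_self_eq_zero (𝕜 := ℝ)]
    linarith
  -- contradiction with positivity of coefficients via linear independence
  have hβne : β ≠ β' := by
    intro h
    rw [h, hβ'β'] at hββ'
    linarith
  set g : {x : V // x ∈ P.base} → ℝ := fun i =>
    P.coeff α i + (if (i : V) = β then 1 else 0) + (if (i : V) = β' then 1 else 0) with hg
  have hsum : ∑ i : {x : V // x ∈ P.base}, g i • (i : V) = 0 := by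
    simp only [hg, add_smul]
    rw [Finset.sum_add_distrib, Finset.sum_add_distrib]
    have e1 : ∑ i : {x : V // x ∈ P.base}, P.coeff α i • (i : V)
        = ∑ γ ∈ P.base, P.coeff α γ • γ := Finset.sum_coe_sort P.base (fun γ => P.coeff α γ • γ)
    have e2 : ∑ i : {x : V // x ∈ P.base}, (if (i : V) = β then (1:ℝ) else 0) • (i : V) = β := by
      rw [Finset.sum_coe_sort P.base (fun γ => (if γ = β then (1:ℝ) else 0) • γ)]
      simp only [ite_smul, one_smul, zero_smul]
      rw [Finset.sum_ite_eq' P.base β (fun γ => γ)]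
      simp [hβbase]
    have e3 : ∑ i : {x : V // x ∈ P.base}, (if (i : V) = β' then (1:ℝ) else 0) • (i : V) = β' := by
      rw [Finset.sum_coe_sort P.base (fun γ => (if γ = β' then (1:ℝ) else 0) • γ)]
      simp only [ite_smul, one_smul, zero_smul]
      rw [Finset.sum_ite_eq' P.base β' (fun γ => γ)]
      simp [hβ'base]
    rw [e1, e2, e3, ← P.coeff_spec α hαroots, hzero]
  have hall := Fintype.linearIndependent_iff.mp P.base_indep g hsum
  have := hall ⟨β, hβbase⟩
  simp only [hg, if_pos rfl, if_neg hβne] at this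
  norm_num at this
  linarith
end
end

section
/- Let α ∈ R⁺, β ∈ Δ(α), and β' ∈ N⁺(α,β). Then n_β(α) < 2 n_{β'}(α). -/
/- Setting: a reduced, irreducible, crystallographic, simply laced root system `roots`
in a real inner product space `V`, with a fixed base `base` of simple roots,
its Weyl group (generated by the reflections in the simple roots), the length
function, the (strong) Bruhat order, the weak left Bruhat order, the sets
`A_ℓ(v)`, `A(v)`, `D(w)`, `AD(v,w)`, and the partial order on roots induced
by the base. -/

open scoped InnerProductSpace Classical

noncomputable section

variable {V : Type*} [NormedAddCommGroup V] [InnerProductSpace ℝ V]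

/-! Expanding `(α, β') = Σ_γ n_γ(α) (γ, β')` over the base, every term with `γ ∉ {β, β'}` is
`≤ 0` because distinct simple roots have nonpositive inner product, and `(β, β') ≤ -(β', β')/2`
because `⟨β, β'⟩` is a negative integer. Hence
`0 < (α, β') ≤ (n_{β'}(α) - n_β(α)/2) (β', β')`. -/

lemma sRefl_apply (α x : V) : sRefl α x = x - (2 * ⟪x, α⟫_ℝ / ⟪α, α⟫_ℝ) • α := rfl

namespace SimplyLacedRootSystem

variable (P : SimplyLacedRootSystem V)

lemma inner_self_pos {α : V} (hα : α ∈ P.roots) : 0 < ⟪α, α⟫_ℝ :=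
  real_inner_self_pos.mpr (P.nonzero α hα)

lemma exists_int_two_mul_inner_eq {α γ : V} (hα : α ∈ P.roots) (hγ : γ ∈ P.roots) :
    ∃ n : ℤ, 2 * ⟪γ, α⟫_ℝ = n * ⟪α, α⟫_ℝ := by
  obtain ⟨n, hn⟩ := P.crystallographic α hα γ hγ
  exact ⟨n, by rw [← hn, div_mul_cancel₀ _ (P.inner_self_pos hα).ne']⟩

lemma coeff_eq_of_eq_sum {μ : V} (hμ : μ ∈ P.roots) {c : V → ℝ}
    (h : μ = ∑ δ ∈ P.base, c δ • δ) {δ : V} (hδ : δ ∈ P.base) : P.coeff μ δ = c δ := by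
  have hzero : ∑ δ ∈ P.base, (P.coeff μ δ - c δ) • δ = 0 := by
    simp only [sub_smul, Finset.sum_sub_distrib, ← P.coeff_spec μ hμ, ← h, sub_self]
  exact sub_eq_zero.mp <|
    (linearIndepOn_iff' (v := id) (s := (P.base : Set V))).mp P.base_indep P.base _ subset_rfl
      hzero δ hδ

lemma inner_nonpos_of_mem_base {γ β : V} (hγ : γ ∈ P.base) (hβ : β ∈ P.base) (hne : γ ≠ β) :
    ⟪γ, β⟫_ℝ ≤ 0 := by
  by_contra! hpos
  have hβr := P.base_subset hβ
  obtain ⟨n, hn⟩ := P.exists_int_two_mul_inner_eq hβr (P.base_subset hγ)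
  have hn_pos : (0 : ℝ) < n := pos_of_mul_pos_left (hn ▸ by positivity) (P.inner_self_pos hβr).le
  -- `s_β γ = γ - n β` is a root whose coefficients at `γ` and `β` have opposite signs.
  have hrefl : sRefl β γ = γ - (n : ℝ) • β := by
    rw [sRefl_apply, hn, mul_div_cancel_right₀ _ (P.inner_self_pos hβr).ne']
  have hroot : γ - (n : ℝ) • β ∈ P.roots := hrefl ▸ P.reflect_mem β hβr γ (P.base_subset hγ)
  set c : V → ℝ := fun δ => (if δ = γ then 1 else 0) - if δ = β then (n : ℝ) else 0
  have hsum : γ - (n : ℝ) • β = ∑ δ ∈ P.base, c δ • δ := by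
    simp [c, sub_smul, Finset.sum_sub_distrib, ite_smul, hγ, hβ]
  have hcγ := P.coeff_eq_of_eq_sum hroot hsum hγ
  have hcβ := P.coeff_eq_of_eq_sum hroot hsum hβ
  simp only [c, if_neg hne, if_neg hne.symm, if_pos] at hcγ hcβ
  rcases P.coeff_sign _ hroot with hs | hs
  · linarith [hs β hβ]
  · linarith [hs γ hγ]

lemma two_mul_inner_le_neg_of_inner_neg {α γ : V} (hα : α ∈ P.roots) (hγ : γ ∈ P.roots)
    (hneg : ⟪γ, α⟫_ℝ < 0) : 2 * ⟪γ, α⟫_ℝ ≤ -⟪α, α⟫_ℝ := by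
  obtain ⟨n, hn⟩ := P.exists_int_two_mul_inner_eq hα hγ
  have hpos := P.inner_self_pos hα
  have hn_neg : (n : ℝ) < 0 := neg_of_mul_neg_left (hn ▸ by linarith) hpos.le
  have hn_le : (n : ℝ) ≤ -1 := by
    have : n < 0 := by exact_mod_cast hn_neg
    exact_mod_cast (show n ≤ -1 by omega)
  rw [hn]
  nlinarith

lemma inner_eq_sum_coeff_mul {α : V} (hα : α ∈ P.roots) (x : V) :
    ⟪α, x⟫_ℝ = ∑ γ ∈ P.base, P.coeff α γ * ⟪γ, x⟫_ℝ := by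
  conv_lhs => rw [P.coeff_spec α hα]
  simp only [sum_inner, real_inner_smul_left]

lemma inner_le_coeff_mul_add_coeff_mul {α β β' : V} (hα : α ∈ P.pos) (hβ : β ∈ P.base)
    (hβ' : β' ∈ P.base) (hne : β ≠ β') :
    ⟪α, β'⟫_ℝ ≤ P.coeff α β' * ⟪β', β'⟫_ℝ + P.coeff α β * ⟪β, β'⟫_ℝ := by
  have hβe : β ∈ P.base.erase β' := Finset.mem_erase.mpr ⟨hne, hβ⟩
  have hrest : ∑ γ ∈ (P.base.erase β').erase β, P.coeff α γ * ⟪γ, β'⟫_ℝ ≤ 0 := by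
    refine Finset.sum_nonpos fun γ hγ => ?_
    obtain ⟨hγβ, hγ⟩ := Finset.mem_erase.mp (Finset.mem_of_mem_erase hγ)
    exact mul_nonpos_of_nonneg_of_nonpos (hα.2 γ hγ) (P.inner_nonpos_of_mem_base hγ hβ' hγβ)
  rw [P.inner_eq_sum_coeff_mul hα.1, ← Finset.add_sum_erase _ _ hβ',
    ← Finset.add_sum_erase _ _ hβe]
  linarith

end SimplyLacedRootSystem

/-- Let α ∈ R⁺, β ∈ Δ(α), and β' ∈ N⁺(α,β). Then n_β(α) < 2 n_{β'}(α). -/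
theorem stmt9 (P : SimplyLacedRootSystem V) (α : V) (hα : α ∈ P.pos)
    (β : V) (hβ : β ∈ P.support α) (β' : V) (hβ' : β' ∈ P.Nplus α β) :
    P.coeff α β < 2 * P.coeff α β' := by
  obtain ⟨hβb, hnβ⟩ := Finset.mem_filter.mp hβ
  obtain ⟨hβ'supp, hββ', hαβ'⟩ := Finset.mem_filter.mp hβ'
  have hβ'b := (Finset.mem_filter.mp hβ'supp).1
  have hne : β ≠ β' := by rintro rfl; linarith [real_inner_self_nonneg (x := β)]
  have hc := P.inner_self_pos (P.base_subset hβ'b)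
  have hle := P.inner_le_coeff_mul_add_coeff_mul hα hβb hβ'b hne
  have hββ'le := P.two_mul_inner_le_neg_of_inner_neg (P.base_subset hβ'b) (P.base_subset hβb) hββ'
  nlinarith
end
end

section
/- Let v ∈ W be a shuffle element with pivot element β. Let α be a minimal element of A(v) \ {β} with respect to the partial order ≤ on roots. Then (α,β) > 0. -/
/- Setting: a reduced, irreducible, crystallographic, simply laced root system `roots`
in a real inner product space `V`, with a fixed base `base` of simple roots,
its Weyl group (generated by the reflections in the simple roots), the length
function, the (strong) Bruhat order, the weak left Bruhat order, the sets
`A_ℓ(v)`, `A(v)`, `D(w)`, `AD(v,w)`, and the partial order on roots induced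
by the base. -/

open scoped InnerProductSpace Classical

noncomputable section

variable {V : Type*} [NormedAddCommGroup V] [InnerProductSpace ℝ V]

namespace SimplyLacedRootSystem

lemma sRefl_apply (α x : V) : sRefl α x = x - (2 * ⟪x, α⟫_ℝ / ⟪α, α⟫_ℝ) • α := rfl

lemma sRefl_self (α : V) (hα : α ≠ 0) : sRefl α α = -α := by
  have h : ⟪α, α⟫_ℝ ≠ 0 := fun he => hα (inner_self_eq_zero.mp he)
  rw [sRefl_apply]
  rw [show 2 * ⟪α, α⟫_ℝ / ⟪α, α⟫_ℝ = 2 by field_simp]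
  rw [two_smul]; abel

lemma sRefl_inner (α x y : V) : ⟪sRefl α x, sRefl α y⟫_ℝ = ⟪x, y⟫_ℝ := by
  by_cases h : (⟪α, α⟫_ℝ) = (0 : ℝ)
  · have hα : α = 0 := inner_self_eq_zero.mp h
    simp [sRefl_apply, hα]
  · rw [sRefl_apply, sRefl_apply]
    simp only [inner_sub_left, inner_sub_right, real_inner_smul_left, real_inner_smul_right]
    rw [real_inner_comm α y]
    field_simp
    ring

lemma sRefl_mul_self (α : V) : sRefl α * sRefl α = 1 := by
  ext x
  exact reflMap_involutive α x

lemma sRefl_inv (α : V) : (sRefl α)⁻¹ = sRefl α := by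
  exact inv_eq_of_mul_eq_one_right (sRefl_mul_self α)

variable (P : SimplyLacedRootSystem V)

lemma word_mem_weyl (l : List V) (hl : ∀ δ ∈ l, δ ∈ P.base) :
    (l.map sRefl).prod ∈ P.weyl := by
  induction l with
  | nil => simp [Subgroup.one_mem]
  | cons a t ih =>
    simp only [List.map_cons, List.prod_cons]
    exact Subgroup.mul_mem _
      (Subgroup.subset_closure ⟨a, by simp [hl a (by simp)], rfl⟩)
      (ih fun δ hδ => hl δ (by simp [hδ]))

lemma word_prod_reverse (l : List V) :
    ((l.map sRefl).prod)⁻¹ = (l.reverse.map sRefl).prod := by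
  induction l with
  | nil => simp
  | cons a t ih =>
    simp only [List.map_cons, List.prod_cons, List.reverse_cons, List.map_append,
      List.prod_append, mul_inv_rev, ih]
    simp [sRefl_inv]

lemma exists_word {w : V ≃ₗ[ℝ] V} (hw : w ∈ P.weyl) :
    ∃ l : List V, (∀ δ ∈ l, δ ∈ P.base) ∧ (l.map sRefl).prod = w := by
  induction hw using Subgroup.closure_induction with
  | mem x hx =>
    obtain ⟨β, hβ, rfl⟩ := hx
    exact ⟨[β], by simpa using hβ, by simp⟩
  | one => exact ⟨[], by simp, by simp⟩
  | mul x y hx hy ihx ihy =>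
    obtain ⟨lx, hlx, rfl⟩ := ihx
    obtain ⟨ly, hly, rfl⟩ := ihy
    refine ⟨lx ++ ly, ?_, by simp⟩
    intro δ hδ
    rcases List.mem_append.mp hδ with h | h
    exacts [hlx δ h, hly δ h]
  | inv x hx ihx =>
    obtain ⟨l, hl, rfl⟩ := ihx
    exact ⟨l.reverse, by simpa using hl, (word_prod_reverse l).symm⟩

lemma inner_self_pos' {x : V} (h : x ≠ 0) : 0 < ⟪x, x⟫_ℝ :=
  lt_of_le_of_ne real_inner_self_nonneg (fun he => h (inner_self_eq_zero.mp he.symm))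

lemma sum_base_eq_zero {c : V → ℝ} (h : ∑ δ ∈ P.base, c δ • δ = 0) :
    ∀ δ ∈ P.base, c δ = 0 := by
  have h' : ∑ x : {x : V // x ∈ P.base}, c x • (x : V) = 0 := by
    rw [Finset.sum_coe_sort P.base (fun δ => c δ • δ)]; exact h
  have := (Fintype.linearIndependent_iff.mp P.base_indep) (fun x => c x) h'
  intro δ hδ
  exact this ⟨δ, hδ⟩

lemma coeff_eq {γ : V} (hγ : γ ∈ P.roots) {c : V → ℝ}
    (h : γ = ∑ δ ∈ P.base, c δ • δ) : ∀ δ ∈ P.base, c δ = P.coeff γ δ := by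
  have h0 : ∑ δ ∈ P.base, (c δ - P.coeff γ δ) • δ = 0 := by
    simp only [sub_smul, Finset.sum_sub_distrib]
    rw [← h, ← P.coeff_spec γ hγ, sub_self]
  intro δ hδ
  have := P.sum_base_eq_zero h0 δ hδ
  linarith

lemma neg_root {γ : V} (hγ : γ ∈ P.roots) : -γ ∈ P.roots := by
  have := P.reflect_mem γ hγ γ hγ
  rwa [sRefl_self γ (P.nonzero γ hγ)] at this

lemma coeff_neg {γ : V} (hγ : γ ∈ P.roots) {δ : V} (hδ : δ ∈ P.base) :
    P.coeff (-γ) δ = -P.coeff γ δ := by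
  have h : -γ = ∑ δ ∈ P.base, (-P.coeff γ δ) • δ := by
    simp only [neg_smul]
    rw [Finset.sum_neg_distrib, ← P.coeff_spec γ hγ]
  exact (P.coeff_eq (P.neg_root hγ) h δ hδ).symm

lemma pos_or_neg {γ : V} (hγ : γ ∈ P.roots) : γ ∈ P.pos ∨ -γ ∈ P.pos := by
  rcases P.coeff_sign γ hγ with h | h
  · exact Or.inl ⟨hγ, h⟩
  · refine Or.inr ⟨P.neg_root hγ, fun δ hδ => ?_⟩
    rw [P.coeff_neg hγ hδ]
    linarith [h δ hδ]

lemma pos_neg_disj {γ : V} (h1 : γ ∈ P.pos) (h2 : -γ ∈ P.pos) : False := by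
  have hγ := h1.1
  have hz : ∀ δ ∈ P.base, P.coeff γ δ = 0 := by
    intro δ hδ
    have := h1.2 δ hδ
    have h2' := h2.2 δ hδ
    rw [P.coeff_neg hγ hδ] at h2'
    linarith
  have : γ = 0 := by
    rw [P.coeff_spec γ hγ]
    exact Finset.sum_eq_zero fun δ hδ => by rw [hz δ hδ, zero_smul]
  exact P.nonzero γ hγ this

lemma coeff_base {β : V} (hβ : β ∈ P.base) {δ : V} (hδ : δ ∈ P.base) :
    P.coeff β δ = if δ = β then 1 else 0 := by
  have h : β = ∑ δ ∈ P.base, (if δ = β then (1:ℝ) else 0) • δ := by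
    have : ∀ δ ∈ P.base, (if δ = β then (1:ℝ) else 0) • δ = if δ = β then β else 0 := by
      intro δ _
      split <;> simp_all
    rw [Finset.sum_congr rfl this, Finset.sum_ite_eq' P.base β (fun _ => β)]
    simp [hβ]
  exact (P.coeff_eq (P.base_subset hβ) h δ hδ).symm

lemma base_mem_pos {β : V} (hβ : β ∈ P.base) : β ∈ P.pos := by
  refine ⟨P.base_subset hβ, fun δ hδ => ?_⟩
  rw [P.coeff_base hβ hδ]
  split <;> norm_num

lemma word_inner (l : List V) (x y : V) :
    ⟪(l.map sRefl).prod x, (l.map sRefl).prod y⟫_ℝ = ⟪x, y⟫_ℝ := by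
  induction l with
  | nil => rfl
  | cons a t ih =>
    have : ((a :: t).map sRefl).prod x = sRefl a ((t.map sRefl).prod x) := rfl
    rw [this, show ((a :: t).map sRefl).prod y = sRefl a ((t.map sRefl).prod y) from rfl,
      sRefl_inner, ih]

lemma weyl_inner {w : V ≃ₗ[ℝ] V} (hw : w ∈ P.weyl) (x y : V) :
    ⟪w x, w y⟫_ℝ = ⟪x, y⟫_ℝ := by
  obtain ⟨l, _, rfl⟩ := P.exists_word hw
  exact word_inner l x y

lemma word_roots (l : List V) (hl : ∀ δ ∈ l, δ ∈ P.base) {γ : V} (hγ : γ ∈ P.roots) :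
    (l.map sRefl).prod γ ∈ P.roots := by
  induction l with
  | nil => exact hγ
  | cons a t ih =>
    have h : ((a :: t).map sRefl).prod γ = sRefl a ((t.map sRefl).prod γ) := rfl
    rw [h]
    exact P.reflect_mem a (P.base_subset (hl a (by simp)))
      _ (ih fun δ hδ => hl δ (by simp [hδ]))

lemma weyl_roots {w : V ≃ₗ[ℝ] V} (hw : w ∈ P.weyl) {γ : V} (hγ : γ ∈ P.roots) :
    w γ ∈ P.roots := by
  obtain ⟨l, hl, rfl⟩ := P.exists_word hw
  exact P.word_roots l hl hγ

lemma weyl_conj {w : V ≃ₗ[ℝ] V} (hw : w ∈ P.weyl) (γ : V) :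
    sRefl (w γ) = w * sRefl γ * w⁻¹ := by
  ext x
  have h1 : (w * sRefl γ * w⁻¹) x = w (sRefl γ (w⁻¹ x)) := rfl
  have h2 : ⟪w γ, w γ⟫_ℝ = ⟪γ, γ⟫_ℝ := P.weyl_inner hw γ γ
  have h4 : w (w⁻¹ x) = x := w.apply_symm_apply x
  have h3 : ⟪(w⁻¹ : V ≃ₗ[ℝ] V) x, γ⟫_ℝ = ⟪x, w γ⟫_ℝ := by
    have := P.weyl_inner hw ((w⁻¹ : V ≃ₗ[ℝ] V) x) γ
    rw [h4] at this
    exact this.symm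
  rw [h1, sRefl_apply, sRefl_apply, map_sub, map_smul, h4, h2, h3]

lemma exists_support_ne {γ β : V} (hγ : γ ∈ P.pos) (hβ : β ∈ P.base) (hne : γ ≠ β) :
    ∃ δ ∈ P.base, δ ≠ β ∧ 0 < P.coeff γ δ := by
  by_contra hcon
  push_neg at hcon
  have hz : ∀ δ ∈ P.base, δ ≠ β → P.coeff γ δ = 0 := by
    intro δ hδ hδβ
    exact le_antisymm (hcon δ hδ hδβ) (hγ.2 δ hδ)
  have hsum : γ = P.coeff γ β • β := by
    conv_lhs => rw [P.coeff_spec γ hγ.1]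
    exact Finset.sum_eq_single_of_mem β hβ (fun δ hδ hδβ => by rw [hz δ hδ hδβ, zero_smul])
  have := P.reduced β (P.base_subset hβ) (P.coeff γ β) (by rw [← hsum]; exact hγ.1)
  rcases this with h | h
  · exact hne (by rw [hsum, h, one_smul])
  · have := hγ.2 β hβ
    rw [h] at this
    linarith

lemma coeff_sRefl {β γ : V} (hβ : β ∈ P.base) (hγ : γ ∈ P.roots) {δ : V} (hδ : δ ∈ P.base) :
    P.coeff (sRefl β γ) δ
      = P.coeff γ δ - (if δ = β then 2 * ⟪γ, β⟫_ℝ / ⟪β, β⟫_ℝ else 0) := by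
  set n : ℝ := 2 * ⟪γ, β⟫_ℝ / ⟪β, β⟫_ℝ with hn
  have h : sRefl β γ = ∑ δ ∈ P.base, (P.coeff γ δ - if δ = β then n else 0) • δ := by
    simp only [sub_smul, Finset.sum_sub_distrib]
    rw [← P.coeff_spec γ hγ]
    have : ∀ δ ∈ P.base, (if δ = β then n else 0) • δ = if δ = β then n • β else 0 := by
      intro δ _
      split <;> simp_all
    rw [Finset.sum_congr rfl this, Finset.sum_ite_eq' P.base β (fun _ => n • β), if_pos hβ]
    rfl
  exact (P.coeff_eq (P.reflect_mem β (P.base_subset hβ) γ hγ) h δ hδ).symm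

lemma sRefl_base_pos {β γ : V} (hβ : β ∈ P.base) (hγ : γ ∈ P.pos) (hne : γ ≠ β) :
    sRefl β γ ∈ P.pos := by
  have hroot : sRefl β γ ∈ P.roots := P.reflect_mem β (P.base_subset hβ) γ hγ.1
  obtain ⟨δ, hδ, hδβ, hcpos⟩ := P.exists_support_ne hγ hβ hne
  have hc : 0 < P.coeff (sRefl β γ) δ := by
    rw [P.coeff_sRefl hβ hγ.1 hδ, if_neg hδβ, sub_zero]
    exact hcpos
  rcases P.coeff_sign _ hroot with h | h
  · exact ⟨hroot, h⟩
  · exact absurd (h δ hδ) (not_le.mpr hc)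

lemma len_le (l : List V) (hl : ∀ δ ∈ l, δ ∈ P.base) {w : V ≃ₗ[ℝ] V}
    (hp : (l.map sRefl).prod = w) : P.len w ≤ l.length := by
  have hmem : l.length ∈ {n | ∃ l : List V, l.length = n ∧ (∀ β ∈ l, β ∈ P.base) ∧
      (l.map sRefl).prod = w} := ⟨l, rfl, hl, hp⟩
  exact Nat.sInf_le hmem

lemma exists_min_word {w : V ≃ₗ[ℝ] V} (hw : w ∈ P.weyl) :
    ∃ l : List V, l.length = P.len w ∧ (∀ δ ∈ l, δ ∈ P.base) ∧ (l.map sRefl).prod = w := by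
  obtain ⟨l, hl, hp⟩ := P.exists_word hw
  have hne : {n | ∃ l : List V, l.length = n ∧ (∀ β ∈ l, β ∈ P.base) ∧
      (l.map sRefl).prod = w}.Nonempty := ⟨l.length, l, rfl, hl, hp⟩
  exact Nat.sInf_mem hne

lemma len_inv_le {w : V ≃ₗ[ℝ] V} (hw : w ∈ P.weyl) : P.len w⁻¹ ≤ P.len w := by
  obtain ⟨l, hlen, hl, hp⟩ := P.exists_min_word hw
  have : (l.reverse.map sRefl).prod = w⁻¹ := by rw [← word_prod_reverse, hp]
  have h := P.len_le l.reverse (fun δ hδ => hl δ (List.mem_reverse.mp hδ)) this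
  simpa [hlen] using h

lemma len_inv {w : V ≃ₗ[ℝ] V} (hw : w ∈ P.weyl) : P.len w⁻¹ = P.len w := by
  refine le_antisymm (P.len_inv_le hw) ?_
  have := P.len_inv_le (P.weyl.inv_mem hw)
  rwa [inv_inv] at this

lemma exchange (l : List V) (hl : ∀ δ ∈ l, δ ∈ P.base) {β : V} (hβ : β ∈ P.base)
    (hneg : -((l.map sRefl).prod β) ∈ P.pos) :
    ∃ l' : List V, (∀ δ ∈ l', δ ∈ P.base) ∧
      (l'.map sRefl).prod = (l.map sRefl).prod * sRefl β ∧ l'.length + 1 = l.length := by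
  induction l with
  | nil =>
    exact absurd hneg (fun h => P.pos_neg_disj (P.base_mem_pos hβ) (by simpa using h))
  | cons a t ih =>
    have ha : a ∈ P.base := hl a (by simp)
    have ht : ∀ δ ∈ t, δ ∈ P.base := fun δ hδ => hl δ (by simp [hδ])
    set u := (t.map sRefl).prod with hu_def
    have hprod : ((a :: t).map sRefl).prod = sRefl a * u := rfl
    by_cases hc : -(u β) ∈ P.pos
    · obtain ⟨t', ht', hpt', hlen⟩ := ih ht hc
      refine ⟨a :: t', ?_, ?_, ?_⟩
      · intro δ hδ
        rcases List.mem_cons.mp hδ with h | h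
        · exact h ▸ ha
        · exact ht' δ h
      · have : ((a :: t').map sRefl).prod = sRefl a * (t'.map sRefl).prod := rfl
        rw [this, hpt', hprod, mul_assoc]
      · simp [← hlen]
    · have hur : u β ∈ P.roots := P.word_roots t ht (P.base_subset hβ)
      have hupos : u β ∈ P.pos := (P.pos_or_neg hur).resolve_right hc
      have hneg' : -(sRefl a (u β)) ∈ P.pos := by
        have : ((a :: t).map sRefl).prod β = sRefl a (u β) := rfl
        rwa [this] at hneg
      have heq : u β = a := by
        by_contra hne
        exact P.pos_neg_disj (P.sRefl_base_pos ha hupos hne) hneg'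
      have hu : u ∈ P.weyl := P.word_mem_weyl t ht
      have hconj : sRefl a = u * sRefl β * u⁻¹ := by
        rw [← heq]; exact P.weyl_conj hu β
      refine ⟨t, ht, ?_, by simp⟩
      rw [hprod, hconj, inv_mul_cancel_right, mul_assoc, sRefl_mul_self, mul_one]

lemma len_lt_of_pos {w : V ≃ₗ[ℝ] V} (hw : w ∈ P.weyl) {β : V} (hβ : β ∈ P.base)
    (hpos : w β ∈ P.pos) : P.len w < P.len (w * sRefl β) := by
  have hsβ : sRefl β ∈ P.weyl := Subgroup.subset_closure ⟨β, hβ, rfl⟩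
  have hw' : w * sRefl β ∈ P.weyl := P.weyl.mul_mem hw hsβ
  obtain ⟨l, hlen, hl, hp⟩ := P.exists_min_word hw'
  have hβ0 : β ≠ 0 := P.nonzero β (P.base_subset hβ)
  have hneg : -((l.map sRefl).prod β) ∈ P.pos := by
    rw [hp]
    have : (w * sRefl β) β = w (sRefl β β) := rfl
    rw [this, sRefl_self β hβ0, map_neg, neg_neg]
    exact hpos
  obtain ⟨l', hl', hp', hlen'⟩ := P.exchange l hl hβ hneg
  have hpw : (l'.map sRefl).prod = w := by
    rw [hp', hp, mul_assoc, sRefl_mul_self, mul_one]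
  have h := P.len_le l' hl' hpw
  omega

lemma len_lt_left {v : V ≃ₗ[ℝ] V} (hv : v ∈ P.weyl) {β : V} (hβ : β ∈ P.base)
    (hpos : v⁻¹ β ∈ P.pos) : P.len v < P.len (sRefl β * v) := by
  have hsβ : sRefl β ∈ P.weyl := Subgroup.subset_closure ⟨β, hβ, rfl⟩
  have h1 : P.len v⁻¹ < P.len (v⁻¹ * sRefl β) :=
    P.len_lt_of_pos (P.weyl.inv_mem hv) hβ hpos
  have h2 : v⁻¹ * sRefl β = (sRefl β * v)⁻¹ := by rw [mul_inv_rev, sRefl_inv]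
  rw [P.len_inv hv, h2, P.len_inv (P.weyl.mul_mem hsβ hv)] at h1
  exact h1

lemma mem_Al {v : V ≃ₗ[ℝ] V} (hv : v ∈ P.weyl) {β : V} (hβ : β ∈ P.base)
    (hpos : v⁻¹ β ∈ P.pos) : β ∈ P.Al v := by
  have hlt := P.len_lt_left hv hβ hpos
  refine ⟨hβ, Relation.ReflTransGen.single ⟨β, P.base_mem_pos hβ, rfl, hlt⟩, fun he => ?_⟩
  rw [← he] at hlt
  exact lt_irrefl _ hlt

lemma base_sum_ite {β : V} (hβ : β ∈ P.base) :
    β = ∑ δ ∈ P.base, (if δ = β then (1:ℝ) else 0) • δ := by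
  have : ∀ δ ∈ P.base, (if δ = β then (1:ℝ) else 0) • δ = if δ = β then β else 0 := by
    intro δ _
    split <;> simp_all
  rw [Finset.sum_congr rfl this, Finset.sum_ite_eq' P.base β (fun _ => β)]
  simp [hβ]

lemma cartan_bound {α γ : V} (hα : α ∈ P.roots) (hγ : γ ∈ P.roots)
    (h1 : α ≠ γ) (h2 : α ≠ -γ) :
    2 * ⟪α, γ⟫_ℝ / ⟪γ, γ⟫_ℝ ≤ 1 ∧ -1 ≤ 2 * ⟪α, γ⟫_ℝ / ⟪γ, γ⟫_ℝ := by
  obtain ⟨n, hn⟩ := P.crystallographic γ hγ α hα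
  have hq : 0 < ⟪γ, γ⟫_ℝ := inner_self_pos' (P.nonzero γ hγ)
  have hqα : ⟪α, α⟫_ℝ = ⟪γ, γ⟫_ℝ := P.simplyLaced α hα γ hγ
  have hip : ⟪α, γ⟫_ℝ = (n : ℝ) * ⟪γ, γ⟫_ℝ / 2 := by
    field_simp at hn
    linarith
  have hip' : ⟪γ, α⟫_ℝ = (n : ℝ) * ⟪γ, γ⟫_ℝ / 2 := by rw [real_inner_comm]; exact hip
  have hsub : ⟪α - γ, α - γ⟫_ℝ = (2 - (n : ℝ)) * ⟪γ, γ⟫_ℝ := by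
    simp only [inner_sub_left, inner_sub_right]
    rw [hip, hip', hqα]; ring
  have hadd : ⟪α + γ, α + γ⟫_ℝ = (2 + (n : ℝ)) * ⟪γ, γ⟫_ℝ := by
    simp only [inner_add_left, inner_add_right]
    rw [hip, hip', hqα]; ring
  have hn2 : (n : ℝ) < 2 := by
    rcases lt_or_ge (n : ℝ) 2 with h | h
    · exact h
    · exfalso
      have hle : ⟪α - γ, α - γ⟫_ℝ ≤ 0 := by
        rw [hsub]; nlinarith
      have : α - γ = 0 := inner_self_eq_zero.mp (le_antisymm hle real_inner_self_nonneg)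
      exact h1 (sub_eq_zero.mp this)
  have hn2' : -2 < (n : ℝ) := by
    rcases lt_or_ge (-2 : ℝ) (n : ℝ) with h | h
    · exact h
    · exfalso
      have hle : ⟪α + γ, α + γ⟫_ℝ ≤ 0 := by
        rw [hadd]; nlinarith
      have : α + γ = 0 := inner_self_eq_zero.mp (le_antisymm hle real_inner_self_nonneg)
      exact h2 (eq_neg_of_add_eq_zero_left this)
  have hi1 : n < 2 := by exact_mod_cast hn2
  have hi2 : -2 < n := by exact_mod_cast hn2'
  constructor
  · rw [hn]; exact_mod_cast (by omega : n ≤ 1)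
  · rw [hn]; exact_mod_cast (by omega : -1 ≤ n)

lemma root_sub {α γ : V} (hα : α ∈ P.roots) (hγ : γ ∈ P.roots)
    (hpos : 0 < ⟪α, γ⟫_ℝ) (hne : α ≠ γ) : α - γ ∈ P.roots := by
  have hq : 0 < ⟪γ, γ⟫_ℝ := inner_self_pos' (P.nonzero γ hγ)
  have hneg : α ≠ -γ := by
    intro h
    rw [h, inner_neg_left] at hpos
    linarith
  obtain ⟨n, hn⟩ := P.crystallographic γ hγ α hα
  have h1 : 2 * ⟪α, γ⟫_ℝ / ⟪γ, γ⟫_ℝ ≤ 1 := (P.cartan_bound hα hγ hne hneg).1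
  have h0 : 0 < 2 * ⟪α, γ⟫_ℝ / ⟪γ, γ⟫_ℝ := by positivity
  have hn1 : (n : ℝ) = 1 := by
    rw [hn] at h1 h0
    have hn0 : 0 < n := by exact_mod_cast h0
    have hn1' : n ≤ 1 := by exact_mod_cast h1
    exact_mod_cast le_antisymm hn1' hn0
  have heq : 2 * ⟪α, γ⟫_ℝ / ⟪γ, γ⟫_ℝ = 1 := by rw [hn, hn1]
  have := P.reflect_mem γ hγ α hα
  rwa [sRefl_apply, heq, one_smul] at this

lemma pos_add_mem {x y : V} (hx : x ∈ P.pos) (hy : y ∈ P.pos)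
    (hr : x + y ∈ P.roots) : x + y ∈ P.pos := by
  have h' : x + y = ∑ δ ∈ P.base, (P.coeff x δ + P.coeff y δ) • δ := by
    simp only [add_smul, Finset.sum_add_distrib]
    rw [← P.coeff_spec x hx.1, ← P.coeff_spec y hy.1]
  refine ⟨hr, fun δ hδ => ?_⟩
  rw [← P.coeff_eq hr h' δ hδ]
  exact add_nonneg (hx.2 δ hδ) (hy.2 δ hδ)

lemma pos_sub_base {α β' : V} (hα : α ∈ P.pos) (hβ' : β' ∈ P.base)
    (hne : α ≠ β') (hr : α - β' ∈ P.roots) : α - β' ∈ P.pos := by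
  have h' : α - β' = ∑ δ ∈ P.base, (P.coeff α δ - if δ = β' then 1 else 0) • δ := by
    simp only [sub_smul, Finset.sum_sub_distrib]
    rw [← P.coeff_spec α hα.1, ← base_sum_ite P hβ']
  have hcoeff : ∀ δ ∈ P.base, P.coeff (α - β') δ
      = P.coeff α δ - (if δ = β' then 1 else 0) :=
    fun δ hδ => (P.coeff_eq hr h' δ hδ).symm
  obtain ⟨δ, hδ, hδβ, hcpos⟩ := P.exists_support_ne hα hβ' hne
  rcases P.coeff_sign _ hr with h | h
  · exact ⟨hr, h⟩
  · exfalso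
    have := h δ hδ
    rw [hcoeff δ hδ, if_neg hδβ, sub_zero] at this
    linarith

end SimplyLacedRootSystem

/-- Let v ∈ W be a shuffle element with pivot element β. Let α be a
minimal element of A(v) \ {β} with respect to the partial order ≤ on roots.
Then (α,β) > 0. -/
theorem stmt11 (P : SimplyLacedRootSystem V) (v : V ≃ₗ[ℝ] V) (hv : v ∈ P.weyl)
    (β : V) (hshuffle : P.Al v = {β})
    (α : V) (hα : P.IsMinimalIn α (P.A v \ {β})) :
    0 < ⟪α, β⟫_ℝ := by
  have hβAl : β ∈ P.Al v := by rw [hshuffle]; rfl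
  have hβb : β ∈ P.base := hβAl.1
  have hβr : β ∈ P.roots := P.base_subset hβb
  obtain ⟨hαS, hmin⟩ := hα
  have hαA : α ∈ P.A v := hαS.1
  have hαβ : α ≠ β := by simpa using hαS.2
  have hαpos : α ∈ P.pos := hαA.1
  have hαr : α ∈ P.roots := hαpos.1
  by_contra hcon
  push_neg at hcon
  -- key: simple roots in A(v) equal β
  have hkey : ∀ δ ∈ P.base, δ ∈ P.A v → δ = β := by
    intro δ hδ hδA
    have := P.mem_Al hv hδ hδA.2
    rw [hshuffle] at this
    exact this
  -- find β' ∈ base with positive coefficient and positive inner product with α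
  have hq : 0 < ⟪α, α⟫_ℝ := SimplyLacedRootSystem.inner_self_pos' (P.nonzero α hαr)
  have hsum : (0:ℝ) < ∑ δ ∈ P.base, P.coeff α δ * ⟪α, δ⟫_ℝ := by
    have h2 : ⟪α, ∑ δ ∈ P.base, P.coeff α δ • δ⟫_ℝ
        = ∑ δ ∈ P.base, P.coeff α δ * ⟪α, δ⟫_ℝ := by
      rw [inner_sum]
      exact Finset.sum_congr rfl fun δ _ => real_inner_smul_right α δ _
    rw [← h2, ← P.coeff_spec α hαr]
    exact hq
  obtain ⟨β', hβ'b, hβ'prod⟩ : ∃ δ ∈ P.base, 0 < P.coeff α δ * ⟪α, δ⟫_ℝ := by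
    by_contra hc
    push_neg at hc
    have := Finset.sum_nonpos hc
    linarith
  have hβ'r : β' ∈ P.roots := P.base_subset hβ'b
  have hinner : 0 < ⟪α, β'⟫_ℝ := by
    rcases le_or_gt (⟪α, β'⟫_ℝ) 0 with h | h
    · nlinarith [hαpos.2 β' hβ'b]
    · exact h
  have hβ'β : β' ≠ β := fun h => by rw [h] at hinner; linarith
  have hαβ' : α ≠ β' := fun h => hβ'β (hkey β' hβ'b (h ▸ hαA))
  have hroot : α - β' ∈ P.roots := P.root_sub hαr hβ'r hinner hαβ'
  have hγpos : α - β' ∈ P.pos := P.pos_sub_base hαpos hβ'b hαβ' hroot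
  -- β' ∉ A(v)
  have hβ'neg : -(v⁻¹ β') ∈ P.pos := by
    have hβ'root' : v⁻¹ β' ∈ P.roots := P.weyl_roots (P.weyl.inv_mem hv) hβ'r
    rcases P.pos_or_neg hβ'root' with h | h
    · exact absurd (hkey β' hβ'b ⟨P.base_mem_pos hβ'b, h⟩) hβ'β
    · exact h
  -- α - β' ∈ A(v)
  have hvγ : v⁻¹ (α - β') = v⁻¹ α + -(v⁻¹ β') := by
    rw [map_sub, sub_eq_add_neg]
  have hγA : α - β' ∈ P.A v := by
    refine ⟨hγpos, ?_⟩
    rw [hvγ]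
    refine P.pos_add_mem hαA.2 hβ'neg ?_
    rw [← hvγ]
    exact P.weyl_roots (P.weyl.inv_mem hv) hroot
  -- α - β' ≠ β
  have hγβ : α - β' ≠ β := by
    intro h
    have hαeq : α = β + β' := by rw [← h]; abel
    have hβ'2 : β' ≠ -β := by
      intro he
      refine P.pos_neg_disj (P.base_mem_pos hβ'b) ?_
      rw [he, neg_neg]
      exact P.base_mem_pos hβb
    have hcartan := (P.cartan_bound hβ'r hβr hβ'β hβ'2).2
    have hqβ : 0 < ⟪β, β⟫_ℝ := SimplyLacedRootSystem.inner_self_pos' (P.nonzero β hβr)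
    have hip : ⟪α, β⟫_ℝ = ⟪β, β⟫_ℝ + ⟪β', β⟫_ℝ := by
      rw [hαeq, inner_add_left]
    have hb := (le_div_iff₀ hqβ).mp hcartan
    linarith
  -- minimality is violated
  have hrlt : P.rlt (α - β') α := by
    constructor
    · refine ⟨fun δ' => if δ' = β' then 1 else 0, fun δ' => by by_cases hh : δ' = β' <;> simp [hh], ?_⟩
      rw [show α - (α - β') = β' by abel]
      exact P.base_sum_ite hβ'b
    · intro h
      exact P.nonzero β' hβ'r (sub_eq_self.mp h)
  exact hmin (α - β') ⟨hγA, by simpa using hγβ⟩ hrlt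
end
end
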